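/- arXiv:0709.0415 — 4 statements merged into one kernel-verified Lean document; each statement's English description precedes it below -/
import Mathlib

section
/- A function u is a solution of the BVP if and only if u : [0,T] → ℝ is continuous and satisfies the integral equation u(t) = −∫₀^t φ_q(g_u(s)) ds + B_u for all t ∈ [0,T], where A_u = −(λβ/(1−β)) ∫₀^η h_u(r) dr, g_u(s) = λ ∫₀^s h_u(r) dr − A_u, and B_u = (1/(1−β)) ( ∫₀^T φ_q(g_u(s)) ds − β ∫₀^η φ_q(g_u(s)) ds ). Moreover, for any solution, φ_p(u′(0)) = A_u and u(0) = B_u. -/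
open Set MeasureTheory

/-- The p-Laplacian map `φ_p(s) = |s|^(p-2) s` (with `φ_p 0 = 0`). -/
noncomputable def phi (p s : ℝ) : ℝ := |s| ^ (p - 2) * s

/-- `h_u(r) = f(u(r)) / (∫₀ᵀ f(u(τ)) dτ)^k`. -/
noncomputable def hfun (T k : ℝ) (f u : ℝ → ℝ) (r : ℝ) : ℝ :=
  f (u r) / (∫ τ in (0:ℝ)..T, f (u τ)) ^ k

/-- `A_u = −(λβ/(1−β)) ∫₀^η h_u(r) dr`. -/
noncomputable def Afun (T η β lam k : ℝ) (f u : ℝ → ℝ) : ℝ :=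
  -(lam * β / (1 - β)) * ∫ r in (0:ℝ)..η, hfun T k f u r

/-- `g_u(s) = λ ∫₀^s h_u(r) dr − A_u`. -/
noncomputable def gfun (T η β lam k : ℝ) (f u : ℝ → ℝ) (s : ℝ) : ℝ :=
  lam * (∫ r in (0:ℝ)..s, hfun T k f u r) - Afun T η β lam k f u

/-- `B_u = (1/(1−β)) ( ∫₀^T φ_q(g_u(s)) ds − β ∫₀^η φ_q(g_u(s)) ds )`. -/
noncomputable def Bfun (T η β lam k q : ℝ) (f u : ℝ → ℝ) : ℝ :=
  (1 / (1 - β)) * ((∫ s in (0:ℝ)..T, phi q (gfun T η β lam k f u s))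
    - β * ∫ s in (0:ℝ)..η, phi q (gfun T η β lam k f u s))

/-- `u` (with derivative `u'`) is a solution of the boundary value problem:
`u` is continuously differentiable on `[0,T]`, `φ_p ∘ u'` is differentiable on `(0,T)` with
`−(φ_p(u'(t)))' = λ h_u(t)` there, `φ_p(u'(0)) − β φ_p(u'(η)) = 0` and `u(T) − β u(η) = 0`. -/
def IsSolution (T η β lam k p : ℝ) (f u u' : ℝ → ℝ) : Prop :=
  (∀ t ∈ Set.Icc (0:ℝ) T, HasDerivWithinAt u (u' t) (Set.Icc (0:ℝ) T) t) ∧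
  ContinuousOn u' (Set.Icc (0:ℝ) T) ∧
  (∀ t ∈ Set.Ioo (0:ℝ) T, HasDerivAt (fun s => phi p (u' s)) (-(lam * hfun T k f u t)) t) ∧
  phi p (u' 0) - β * phi p (u' η) = 0 ∧
  u T - β * u η = 0


open Filter Topology

/-!
Integrating `−(φ_p(u'))' = λ h_u` from `0` gives `φ_p(u'(t)) = φ_p(u'(0)) − λ ∫₀ᵗ h_u`, and the
boundary condition `φ_p(u'(0)) = β φ_p(u'(η))` pins down `φ_p(u'(0)) = A_u`, so that
`φ_p(u'(t)) = −g_u(t)`. Since `φ_q` inverts `φ_p` and both are odd, `u' = −φ_q ∘ g_u`; integrating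
once more and imposing `u(T) = β u(η)` determines `u(0) = B_u`. Conversely, the right-hand side of
the integral equation is a primitive of `−φ_q ∘ g_u`, and the same computations run backwards.
-/

section PLaplacian

lemma phi_zero (p : ℝ) : phi p 0 = 0 := by simp [phi]

lemma phi_neg (p s : ℝ) : phi p (-s) = -phi p s := by
  simp only [phi, abs_neg]; ring

variable {p q : ℝ}

lemma abs_phi (hp : p ≠ 1) (s : ℝ) : |phi p s| = |s| ^ (p - 1) := by
  rcases eq_or_ne s 0 with rfl | hs
  · simp [phi, Real.zero_rpow (sub_ne_zero.2 hp)]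
  · rw [phi, abs_mul, abs_of_nonneg (Real.rpow_nonneg (abs_nonneg s) _),
      show p - 1 = (p - 2) + 1 by ring, Real.rpow_add_one (abs_ne_zero.2 hs)]

lemma continuous_phi (hp : 1 < p) : Continuous (phi p) := by
  refine continuous_iff_continuousAt.2 fun x => ?_
  rcases eq_or_ne x 0 with rfl | hx
  · have hlim : Tendsto (fun s : ℝ => |s| ^ (p - 1)) (𝓝 0) (𝓝 0) := by
      simpa [Real.zero_rpow (sub_pos.2 hp).ne'] using
        (continuous_abs.rpow_const fun _ => Or.inr (sub_pos.2 hp).le).tendsto 0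
    rw [ContinuousAt, phi_zero]
    exact squeeze_zero_norm (fun s => (abs_phi hp.ne' s).le) hlim
  · exact (continuous_abs.continuousAt.rpow_const (Or.inl (abs_ne_zero.2 hx))).mul continuousAt_id

lemma phi_phi (hpq : p.HolderConjugate q) (s : ℝ) : phi q (phi p s) = s := by
  rcases eq_or_ne s 0 with rfl | hs
  · rw [phi_zero, phi_zero]
  · have hs' : 0 < |s| := abs_pos.2 hs
    rw [phi, abs_phi hpq.lt.ne', ← Real.rpow_mul hs'.le, phi, ← mul_assoc, ← Real.rpow_add hs',
      show (p - 1) * (q - 2) + (p - 2) = p * q - p - q by ring, hpq.mul_eq_add]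
    simp

end PLaplacian

section Calculus

variable {a b t : ℝ} {F F' : ℝ → ℝ}

lemma ContinuousOn.hasDerivWithinAt_integral_Icc (hF : ContinuousOn F (Icc a b))
    (ht : t ∈ Icc a b) :
    HasDerivWithinAt (fun x => ∫ s in a..x, F s) (F t) (Icc a b) t := by
  have hab : a ≤ b := ht.1.trans ht.2
  set G : ℝ → ℝ := fun x => F (projIcc a b hab x)
  have hG : Continuous G :=
    hF.comp_continuous (continuous_subtype_val.comp continuous_projIcc)
      fun x => (projIcc a b hab x).2
  have hGF : EqOn G F (Icc a b) := fun x hx => by simp [G, projIcc_of_mem hab hx]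
  have hderiv := (hG.integral_hasStrictDerivAt a t).hasDerivAt.hasDerivWithinAt (s := Icc a b)
  rw [hGF ht] at hderiv
  have hprim : ∀ x ∈ Icc a b, ∫ s in a..x, F s = ∫ s in a..x, G s := fun x hx =>
    intervalIntegral.integral_congr fun s hs =>
      (hGF (uIcc_subset_Icc (left_mem_Icc.2 hab) hx hs)).symm
  exact hderiv.congr hprim (hprim t ht)

lemma integral_eq_sub_of_hasDerivAt_of_mem_Icc (ht : t ∈ Icc a b)
    (hF : ContinuousOn F (Icc a b)) (hderiv : ∀ x ∈ Ioo a b, HasDerivAt F (F' x) x)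
    (hF' : ContinuousOn F' (Icc a b)) :
    ∫ s in a..t, F' s = F t - F a :=
  intervalIntegral.integral_eq_sub_of_hasDerivAt_of_le ht.1
    (hF.mono (Icc_subset_Icc_right ht.2))
    (fun x hx => hderiv x ⟨hx.1, hx.2.trans_le ht.2⟩)
    ((hF'.mono (uIcc_subset_Icc (left_mem_Icc.2 (ht.1.trans ht.2)) ht)).intervalIntegrable)

end Calculus

section BVP

variable {T η β lam k p q t : ℝ} {f u u' : ℝ → ℝ}

lemma continuousOn_hfun (hf : Continuous f) (hu : ContinuousOn u (Icc 0 T)) :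
    ContinuousOn (hfun T k f u) (Icc 0 T) :=
  (hf.comp_continuousOn hu).div_const _

lemma hasDerivWithinAt_gfun (hf : Continuous f) (hu : ContinuousOn u (Icc 0 T))
    (ht : t ∈ Icc 0 T) :
    HasDerivWithinAt (gfun T η β lam k f u) (lam * hfun T k f u t) (Icc 0 T) t :=
  (((continuousOn_hfun hf hu).hasDerivWithinAt_integral_Icc ht).const_mul lam).sub_const _

lemma continuousOn_gfun (hf : Continuous f) (hu : ContinuousOn u (Icc 0 T)) :
    ContinuousOn (gfun T η β lam k f u) (Icc 0 T) :=
  fun _ ht => (hasDerivWithinAt_gfun hf hu ht).continuousWithinAt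

namespace IsSolution

variable (hs : IsSolution T η β lam k p f u u') (hf : Continuous f)
include hs

lemma continuousOn : ContinuousOn u (Icc 0 T) :=
  fun t ht => (hs.1 t ht).continuousWithinAt

include hf

lemma phi_deriv_eq (hp : 1 < p) (ht : t ∈ Icc 0 T) :
    phi p (u' t) = phi p (u' 0) - lam * ∫ r in (0:ℝ)..t, hfun T k f u r := by
  have hFTC := integral_eq_sub_of_hasDerivAt_of_mem_Icc (F := fun s => phi p (u' s)) ht
    ((continuous_phi hp).comp_continuousOn hs.2.1) hs.2.2.1
    (continuousOn_const.mul (continuousOn_hfun hf hs.continuousOn)).neg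
  rw [intervalIntegral.integral_neg, intervalIntegral.integral_const_mul] at hFTC
  linarith

lemma phi_deriv_zero (hp : 1 < p) (hη : η ∈ Icc 0 T) (hβ : β ≠ 1) :
    phi p (u' 0) = Afun T η β lam k f u := by
  have hbc : phi p (u' 0) - β * phi p (u' η) = 0 := hs.2.2.2.1
  rw [hs.phi_deriv_eq hf hp hη] at hbc
  have : 1 - β ≠ 0 := sub_ne_zero.2 hβ.symm
  unfold Afun
  field_simp
  linear_combination hbc

lemma phi_deriv_eq_neg_gfun (hp : 1 < p) (hη : η ∈ Icc 0 T) (hβ : β ≠ 1)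
    (ht : t ∈ Icc 0 T) :
    phi p (u' t) = -gfun T η β lam k f u t := by
  rw [hs.phi_deriv_eq hf hp ht, hs.phi_deriv_zero hf hp hη hβ, gfun]
  ring

lemma deriv_eq (hpq : p.HolderConjugate q) (hη : η ∈ Icc 0 T) (hβ : β ≠ 1)
    (ht : t ∈ Icc 0 T) :
    u' t = -phi q (gfun T η β lam k f u t) := by
  rw [← phi_neg, ← hs.phi_deriv_eq_neg_gfun hf hpq.lt hη hβ ht, phi_phi hpq]

lemma eq_sub_integral (hpq : p.HolderConjugate q) (hη : η ∈ Icc 0 T) (hβ : β ≠ 1)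
    (ht : t ∈ Icc 0 T) :
    u t = u 0 - ∫ s in (0:ℝ)..t, phi q (gfun T η β lam k f u s) := by
  have hFTC := integral_eq_sub_of_hasDerivAt_of_mem_Icc ht hs.continuousOn
    (fun x hx => (hs.1 x (Ioo_subset_Icc_self hx)).hasDerivAt (Icc_mem_nhds hx.1 hx.2)) hs.2.1
  rw [intervalIntegral.integral_congr fun s hs' => hs.deriv_eq hf hpq hη hβ
    (uIcc_subset_Icc (left_mem_Icc.2 (ht.1.trans ht.2)) ht hs'),
    intervalIntegral.integral_neg] at hFTC
  linarith

lemma apply_zero (hpq : p.HolderConjugate q) (hη : η ∈ Icc 0 T) (hβ : β ≠ 1) :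
    u 0 = Bfun T η β lam k q f u := by
  have hbc : u T - β * u η = 0 := hs.2.2.2.2
  rw [hs.eq_sub_integral hf hpq hη hβ (right_mem_Icc.2 (hη.1.trans hη.2)),
    hs.eq_sub_integral hf hpq hη hβ hη] at hbc
  have : 1 - β ≠ 0 := sub_ne_zero.2 hβ.symm
  unfold Bfun
  field_simp
  linear_combination hbc

lemma integral_equation (hpq : p.HolderConjugate q) (hη : η ∈ Icc 0 T) (hβ : β ≠ 1)
    (ht : t ∈ Icc 0 T) :
    u t = -(∫ s in (0:ℝ)..t, phi q (gfun T η β lam k f u s)) + Bfun T η β lam k q f u := by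
  rw [hs.eq_sub_integral hf hpq hη hβ ht, hs.apply_zero hf hpq hη hβ]
  ring

end IsSolution

lemma isSolution_of_integral_equation (hf : Continuous f) (hpq : p.HolderConjugate q)
    (hη : η ∈ Icc 0 T) (hβ : β ≠ 1) (hu : ContinuousOn u (Icc 0 T))
    (heq : ∀ t ∈ Icc 0 T,
      u t = -(∫ s in (0:ℝ)..t, phi q (gfun T η β lam k f u s)) + Bfun T η β lam k q f u) :
    IsSolution T η β lam k p f u (fun t => -phi q (gfun T η β lam k f u t)) := by
  have hφg : ContinuousOn (fun s => phi q (gfun T η β lam k f u s)) (Icc 0 T) :=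
    (continuous_phi hpq.symm.lt).comp_continuousOn (continuousOn_gfun hf hu)
  have hφφ : ∀ s, phi p (-phi q (gfun T η β lam k f u s)) = -gfun T η β lam k f u s :=
    fun s => by rw [phi_neg, phi_phi hpq.symm]
  have : 1 - β ≠ 0 := sub_ne_zero.2 hβ.symm
  refine ⟨fun t ht => ?_, hφg.neg, fun t ht => ?_, ?_, ?_⟩
  · exact ((hφg.hasDerivWithinAt_integral_Icc ht).neg.add_const _).congr heq (heq t ht)
  · simp only [hφφ]
    exact ((hasDerivWithinAt_gfun hf hu (Ioo_subset_Icc_self ht)).hasDerivAt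
      (Icc_mem_nhds ht.1 ht.2)).neg
  · rw [hφφ, hφφ, gfun, gfun, intervalIntegral.integral_same, Afun]
    field_simp
    ring
  · rw [heq T (right_mem_Icc.2 (hη.1.trans hη.2)), heq η hη, Bfun]
    field_simp
    ring

end BVP

theorem integral_equation_characterization_general
    (T η β lam k p q : ℝ) (f : ℝ → ℝ)
    (hη : 0 < η) (hηT : η < T) (hβ1 : β < 1)
    (hp : 1 < p) (hpq : 1 / p + 1 / q = 1)
    (hf : Continuous f) (u : ℝ → ℝ) :
    ((∃ u', IsSolution T η β lam k p f u u') ↔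
      (ContinuousOn u (Set.Icc (0:ℝ) T) ∧
        ∀ t ∈ Set.Icc (0:ℝ) T,
          u t = -(∫ s in (0:ℝ)..t, phi q (gfun T η β lam k f u s))
                + Bfun T η β lam k q f u)) ∧
    (∀ u', IsSolution T η β lam k p f u u' →
      phi p (u' 0) = Afun T η β lam k f u ∧ u 0 = Bfun T η β lam k q f u) := by
  have hηI : η ∈ Icc 0 T := ⟨hη.le, hηT.le⟩
  have hpq' : p.HolderConjugate q :=
    Real.holderConjugate_iff.2 ⟨hp, by simpa only [one_div] using hpq⟩
  refine ⟨⟨fun ⟨u', hs⟩ => ⟨hs.continuousOn, fun t ht => ?_⟩, fun ⟨hu, heq⟩ => ?_⟩,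
    fun u' hs => ?_⟩
  · exact hs.integral_equation hf hpq' hηI hβ1.ne ht
  · exact ⟨_, isSolution_of_integral_equation hf hpq' hηI hβ1.ne hu heq⟩
  · exact ⟨hs.phi_deriv_zero hf hp hηI hβ1.ne, hs.apply_zero hf hpq' hηI hβ1.ne⟩

/-- Lemma 3.1: `u` solves the BVP iff `u` is continuous on `[0,T]` and satisfies the
integral equation `u(t) = −∫₀ᵗ φ_q(g_u(s)) ds + B_u`; moreover any solution has
`φ_p(u'(0)) = A_u` and `u(0) = B_u`. -/
theorem integral_equation_characterization
    (T η β lam k p q : ℝ) (f : ℝ → ℝ)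
    (hT : 0 < T) (hη : 0 < η) (hηT : η < T) (hβ0 : 0 < β) (hβ1 : β < 1)
    (hlam : 0 < lam) (hk : 0 < k) (hp : 1 < p) (hpq : 1 / p + 1 / q = 1)
    (hf : Continuous f) (hfpos : ∀ x, 0 < f x) (u : ℝ → ℝ) :
    ((∃ u', IsSolution T η β lam k p f u u') ↔
      (ContinuousOn u (Set.Icc (0:ℝ) T) ∧
        ∀ t ∈ Set.Icc (0:ℝ) T,
          u t = -(∫ s in (0:ℝ)..t, phi q (gfun T η β lam k f u s))
                + Bfun T η β lam k q f u)) ∧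
    (∀ u', IsSolution T η β lam k p f u u' →
      phi p (u' 0) = Afun T η β lam k f u ∧ u 0 = Bfun T η β lam k q f u) :=
  integral_equation_characterization_general T η β lam k p q f hη hηT hβ1 hp hpq hf u
end

section
/- Every solution u of the BVP satisfies u(T) ≥ ρ·u(0), where ρ = β(T−η)/(T−βη) ≥ 0. -/
open Set MeasureTheory

lemma phi_continuous {p : ℝ} (hp : 1 < p) : Continuous (phi p) := by
  rw [continuous_iff_continuousAt]
  intro x
  rcases eq_or_ne x 0 with rfl | hx
  · have h1 : Filter.Tendsto (fun s : ℝ => |s| ^ (p-1)) (nhds 0) (nhds 0) := by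
      have hc : ContinuousAt (fun s : ℝ => |s| ^ (p-1)) 0 := by
        exact (Real.continuousAt_rpow_const _ _ (Or.inr (by linarith))).comp
          continuous_abs.continuousAt
      simpa [Real.zero_rpow (by linarith : p - 1 ≠ 0)] using hc.tendsto
    have h2 : Filter.Tendsto (phi p) (nhds 0) (nhds 0) := by
      apply squeeze_zero_norm ?_ h1
      intro s
      rcases eq_or_ne s 0 with rfl | hs
      · simp [phi, Real.zero_rpow (by linarith : p - 1 ≠ 0)]
      · have : ‖phi p s‖ = |s| ^ (p-1) := by
          unfold phi
          rw [norm_mul]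
          simp only [Real.norm_eq_abs, abs_abs]
          rw [abs_of_nonneg (Real.rpow_nonneg (abs_nonneg s) _),
            show p - 1 = (p-2)+1 by ring,
            Real.rpow_add_one (abs_ne_zero.2 hs)]
        rw [this]
    unfold ContinuousAt
    simpa [phi] using h2
  · exact ((Real.continuousAt_rpow_const _ _ (Or.inl (abs_ne_zero.2 hx))).comp
      continuous_abs.continuousAt).mul continuousAt_id

lemma phi_neg_iff {p : ℝ} {x : ℝ} : phi p x < 0 ↔ x < 0 := by
  unfold phi
  constructor
  · intro h
    by_contra h'
    push_neg at h'
    have : 0 ≤ |x| ^ (p-2) * x := mul_nonneg (Real.rpow_nonneg (abs_nonneg x) _) h'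
    linarith
  · intro h
    exact mul_neg_of_pos_of_neg (Real.rpow_pos_of_pos (abs_pos.2 h.ne) _) h

lemma phi_le_neg {p : ℝ} (hp : 1 < p) {x y : ℝ} (hx : x < 0) (hy : y < 0)
    (h : phi p x ≤ phi p y) : x ≤ y := by
  by_contra h'
  push_neg at h'
  have hx' : phi p x = -((-x) ^ (p-1)) := by
    unfold phi
    rw [abs_of_neg hx, show p - 1 = (p-2)+1 by ring,
      Real.rpow_add_one (by linarith : (-x) ≠ 0)]
    ring
  have hy' : phi p y = -((-y) ^ (p-1)) := by
    unfold phi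
    rw [abs_of_neg hy, show p - 1 = (p-2)+1 by ring,
      Real.rpow_add_one (by linarith : (-y) ≠ 0)]
    ring
  have : (-x) ^ (p-1) < (-y) ^ (p-1) :=
    Real.rpow_lt_rpow (by linarith) (by linarith) (by linarith)
  rw [hx', hy'] at h
  linarith

/-- Every solution of the BVP satisfies `u(T) ≥ ρ u(0)` with `ρ = β(T−η)/(T−βη) ≥ 0`. -/
theorem solution_uT_ge_rho_u0
    (T η β lam k p : ℝ) (f : ℝ → ℝ)
    (hT : 0 < T) (hη : 0 < η) (hηT : η < T) (hβ0 : 0 < β) (hβ1 : β < 1)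
    (hlam : 0 < lam) (hk : 0 < k) (hp : 1 < p)
    (hf : Continuous f) (hfpos : ∀ x, 0 < f x)
    (u u' : ℝ → ℝ) (hu : IsSolution T η β lam k p f u u') :
    0 ≤ β * (T - η) / (T - β * η) ∧ β * (T - η) / (T - β * η) * u 0 ≤ u T := by
  obtain ⟨hu1, hu'c, hode, hbc1, hbc2⟩ := hu
  have hTβη : 0 < T - β * η := by nlinarith
  refine ⟨div_nonneg (by nlinarith) hTβη.le, ?_⟩
  have hucont : ContinuousOn u (Icc 0 T) := fun t ht => (hu1 t ht).continuousWithinAt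
  have hfu : ContinuousOn (fun τ => f (u τ)) (uIcc (0:ℝ) T) := by
    rw [Set.uIcc_of_le hT.le]
    exact hf.comp_continuousOn hucont
  have hI : 0 < ∫ τ in (0:ℝ)..T, f (u τ) :=
    intervalIntegral.intervalIntegral_pos_of_pos_on hfu.intervalIntegrable
      (fun x _ => hfpos _) hT
  have hh : ∀ r, 0 < hfun T k f u r :=
    fun r => div_pos (hfpos _) (Real.rpow_pos_of_pos hI k)
  set G := fun t => phi p (u' t) with hGdef
  have hGcont : ContinuousOn G (Icc 0 T) := (phi_continuous hp).comp_continuousOn hu'c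
  have hGanti : StrictAntiOn G (Icc 0 T) := by
    apply strictAntiOn_of_deriv_neg (convex_Icc _ _) hGcont
    intro x hx
    rw [interior_Icc] at hx
    rw [(hode x hx).deriv]
    have := hh x
    nlinarith
  have h0mem : (0:ℝ) ∈ Icc (0:ℝ) T := ⟨le_rfl, hT.le⟩
  have hηmem : η ∈ Icc (0:ℝ) T := ⟨hη.le, hηT.le⟩
  have hGη : G η < G 0 := hGanti h0mem hηmem hη
  have hG0eq : G 0 = β * G η := by
    simp only [hGdef]
    linarith [hbc1]
  have hGηneg : G η < 0 := by nlinarith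
  have hG0neg : G 0 < 0 := by rw [hG0eq]; exact mul_neg_of_pos_of_neg hβ0 hGηneg
  have hGneg : ∀ t ∈ Icc (0:ℝ) T, G t < 0 := by
    intro t ht
    rcases eq_or_lt_of_le ht.1 with h | h
    · rw [← h]; exact hG0neg
    · exact lt_trans (hGanti h0mem ht h) hG0neg
  have hu'neg : ∀ t ∈ Icc (0:ℝ) T, u' t < 0 := fun t ht => phi_neg_iff.1 (hGneg t ht)
  have hu'anti : ∀ ⦃x⦄, x ∈ Icc (0:ℝ) T → ∀ ⦃y⦄, y ∈ Icc (0:ℝ) T → x < y → u' y ≤ u' x := by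
    intro x hx y hy hxy
    exact phi_le_neg hp (hu'neg y hy) (hu'neg x hx) (hGanti hx hy hxy).le
  have hder : ∀ x ∈ Ioo (0:ℝ) T, HasDerivAt u (u' x) x := fun x hx =>
    (hu1 x (Ioo_subset_Icc_self hx)).hasDerivAt (Icc_mem_nhds hx.1 hx.2)
  obtain ⟨c, hc, hceq⟩ := exists_hasDerivAt_eq_slope u u' hη
    (hucont.mono (Icc_subset_Icc le_rfl hηT.le))
    (fun x hx => hder x ⟨hx.1, hx.2.trans hηT⟩)
  obtain ⟨d, hd, hdeq⟩ := exists_hasDerivAt_eq_slope u u' hηT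
    (hucont.mono (Icc_subset_Icc hη.le le_rfl))
    (fun x hx => hder x ⟨hη.trans hx.1, hx.2⟩)
  have hcmem : c ∈ Icc (0:ℝ) T := ⟨hc.1.le, (hc.2.trans hηT).le⟩
  have hdmem : d ∈ Icc (0:ℝ) T := ⟨(hη.trans hd.1).le, hd.2.le⟩
  have hcd : u' d ≤ u' c := hu'anti hcmem hdmem (hc.2.trans hd.1)
  rw [hceq, hdeq] at hcd
  have key : (u T - u η) * (η - 0) ≤ (u η - u 0) * (T - η) := by
    rw [div_le_div_iff₀ (by linarith) (by linarith)] at hcd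
    linarith
  have hbT : u T = β * u η := by linarith [hbc2]
  rw [div_mul_eq_mul_div, div_le_iff₀ hTβη]
  have lin : u 0 * (T - η) ≤ u η * (T - β * η) := by nlinarith
  nlinarith [mul_le_mul_of_nonneg_left lin hβ0.le]
end

section
/- For every bounded subset D of the cone K, the image G(D) is bounded in C([0,T],ℝ); in fact, for every u ∈ D one has ‖Gu‖ ≤ (2/(1−β)) · φ_q( λ·M_D / (T·m_D)^k ) · ∫₀^T φ_q( s + βη/(1−β) ) ds, where M_D = sup { f(u(t)) : u ∈ D, t ∈ [0,T] } and m_D = inf { f(u(t)) : u ∈ D, t ∈ [0,T] }. -/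
open Set MeasureTheory

/-- The operator `G` of the integral equation: `(Gu)(t) = −∫₀ᵗ φ_q(g_u(s)) ds + B_u`. -/
noncomputable def Gop (T η β lam k q : ℝ) (f u : ℝ → ℝ) (t : ℝ) : ℝ :=
  -(∫ s in (0:ℝ)..t, phi q (gfun T η β lam k f u s)) + Bfun T η β lam k q f u

/-- The sup norm of `u` over `[0,T]`. -/
noncomputable def supNorm (T : ℝ) (u : ℝ → ℝ) : ℝ := ⨆ t : Set.Icc (0:ℝ) T, |u t|

/-- Membership in the cone `K`: `u` is continuous and concave on `[0,T]` and
`min_{[0,T]} u ≥ ρ ‖u‖`. -/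
def InCone (T ρ : ℝ) (u : ℝ → ℝ) : Prop :=
  ContinuousOn u (Set.Icc (0:ℝ) T) ∧ ConcaveOn ℝ (Set.Icc (0:ℝ) T) u ∧
    ∀ t ∈ Set.Icc (0:ℝ) T, ρ * supNorm T u ≤ u t

/-! On `[0,T]` one has `m_D ≤ f(u) ≤ M_D`, so `∫₀ᵀ f(u) ≥ T m_D` and `0 ≤ h_u ≤ M_D/(T m_D)^k`.
Hence `0 ≤ g_u(s) ≤ λ M_D/(T m_D)^k · (s + βη/(1-β))`, and `φ_q`, being monotone and
multiplicative on `[0,∞)`, bounds `ψ = φ_q ∘ g_u` by `φ_q(λ M_D/(T m_D)^k) φ_q(s + βη/(1-β))`.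
For nonnegative `ψ` the constant `B_u` lies between `∫₀ᵀ ψ` and `∫₀ᵀ ψ/(1-β)`, which traps
`(Gu)(t) = B_u - ∫₀ᵗ ψ` in `[0, ∫₀ᵀ ψ/(1-β)]`. -/

lemma phi_nonneg {q s : ℝ} (hs : 0 ≤ s) : 0 ≤ phi q s :=
  mul_nonneg (Real.rpow_nonneg (abs_nonneg _) _) hs

lemma phi_eq_rpow {q s : ℝ} (hq : 1 < q) (hs : 0 ≤ s) : phi q s = s ^ (q - 1) := by
  rcases hs.eq_or_lt with rfl | hs
  · simp [phi, Real.zero_rpow (by linarith : q - 1 ≠ 0)]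
  · rw [phi, abs_of_pos hs, show q - 1 = q - 2 + 1 by ring, Real.rpow_add_one hs.ne']

lemma phi_mul (q x y : ℝ) : phi q (x * y) = phi q x * phi q y := by
  rw [phi, phi, phi, abs_mul, Real.mul_rpow (abs_nonneg x) (abs_nonneg y)]
  ring

lemma monotoneOn_phi {q : ℝ} (hq : 1 < q) : MonotoneOn (phi q) (Ici 0) := by
  intro a ha b hb hab
  rw [phi_eq_rpow hq ha, phi_eq_rpow hq hb]
  exact Real.rpow_le_rpow ha hab (by linarith)

lemma supNorm_le {T C : ℝ} {u : ℝ → ℝ} (hT : 0 ≤ T) (h : ∀ t ∈ Icc 0 T, |u t| ≤ C) :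
    supNorm T u ≤ C :=
  have : Nonempty (Icc (0:ℝ) T) := (nonempty_Icc.mpr hT).to_subtype
  ciSup_le fun t => h t t.2

lemma sInf_pos_of_subset_image {f : ℝ → ℝ} {K S : Set ℝ} (hK : IsCompact K)
    (hf : ContinuousOn f K) (hpos : ∀ x ∈ K, 0 < f x) (hSK : S ⊆ f '' K) (hS : S.Nonempty) :
    0 < sInf S := by
  have hfK := hK.image_of_continuousOn hf
  obtain ⟨x, hx, hfx⟩ := hfK.sInf_mem (hS.mono hSK)
  calc 0 < f x := hpos x hx
    _ = sInf (f '' K) := hfx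
    _ ≤ sInf S := csInf_le_csInf hfK.bddBelow hS hSK

lemma mul_le_integral_of_le {g : ℝ → ℝ} {T m : ℝ} (hT : 0 ≤ T)
    (hg : IntervalIntegrable g volume 0 T) (h : ∀ t ∈ Icc 0 T, m ≤ g t) :
    T * m ≤ ∫ t in (0:ℝ)..T, g t := by
  calc T * m = ∫ _ in (0:ℝ)..T, m := by simp
    _ ≤ ∫ t in (0:ℝ)..T, g t := intervalIntegral.integral_mono_on hT intervalIntegrable_const hg h

lemma integral_mem_Icc_mul {h : ℝ → ℝ} {T H x : ℝ} (hh : ∀ r ∈ Icc 0 T, h r ∈ Icc 0 H)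
    (hx : x ∈ Icc 0 T) : ∫ r in (0:ℝ)..x, h r ∈ Icc 0 (H * x) := by
  have hh' : ∀ r ∈ Icc 0 x, h r ∈ Icc 0 H := fun r hr => hh r ⟨hr.1, hr.2.trans hx.2⟩
  refine ⟨intervalIntegral.integral_nonneg hx.1 fun r hr => (hh' r hr).1, ?_⟩
  have hnorm := intervalIntegral.norm_integral_le_of_norm_le_const (C := H) fun r hr => by
    rw [uIoc_of_le hx.1] at hr
    have := hh' r (Ioc_subset_Icc_self hr)
    rw [Real.norm_eq_abs, abs_of_nonneg this.1]
    exact this.2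
  rw [sub_zero, abs_of_nonneg hx.1] at hnorm
  exact (le_abs_self _).trans hnorm

lemma integral_le_integral_of_mem_Icc {ψ : ℝ → ℝ} {T x : ℝ}
    (hψ : IntervalIntegrable ψ volume 0 T) (hψ0 : ∀ s ∈ Icc 0 T, 0 ≤ ψ s) (hx : x ∈ Icc 0 T) :
    ∫ s in (0:ℝ)..x, ψ s ≤ ∫ s in (0:ℝ)..T, ψ s :=
  intervalIntegral.integral_mono_interval le_rfl hx.1 hx.2
    ((ae_restrict_mem measurableSet_Ioc).mono fun _ hs => hψ0 _ (Ioc_subset_Icc_self hs)) hψ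

lemma abs_neg_integral_add_le {ψ : ℝ → ℝ} {T η β t : ℝ}
    (hψ : IntervalIntegrable ψ volume 0 T) (hψ0 : ∀ s ∈ Icc 0 T, 0 ≤ ψ s)
    (hη : η ∈ Icc 0 T) (ht : t ∈ Icc 0 T) (hβ0 : 0 ≤ β) (hβ1 : β < 1) :
    |-(∫ s in (0:ℝ)..t, ψ s) + 1 / (1 - β) * ((∫ s in (0:ℝ)..T, ψ s) - β * ∫ s in (0:ℝ)..η, ψ s)|
      ≤ 1 / (1 - β) * ∫ s in (0:ℝ)..T, ψ s := by
  have hnonneg : ∀ x ∈ Icc 0 T, 0 ≤ ∫ s in (0:ℝ)..x, ψ s := fun x hx =>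
    intervalIntegral.integral_nonneg hx.1 fun s hs => hψ0 s ⟨hs.1, hs.2.trans hx.2⟩
  have hta := integral_le_integral_of_mem_Icc hψ hψ0 ht
  have hηa := integral_le_integral_of_mem_Icc hψ hψ0 hη
  have ht0 := hnonneg t ht
  have hη0 := hnonneg η hη
  set c := 1 / (1 - β) with hc
  have hc1 : c * (1 - β) = 1 := by rw [hc]; field_simp [(by linarith : (1 - β) ≠ 0)]
  have hc0 : 0 ≤ c := by rw [hc]; exact div_nonneg zero_le_one (by linarith)
  rw [abs_le]
  constructor <;> nlinarith [mul_le_mul_of_nonneg_left hηa hβ0, mul_nonneg hβ0 hη0]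

section Operator

variable {T η β lam k : ℝ} {f u : ℝ → ℝ}

lemma hfun_mem_Icc {m M r : ℝ} (hT : 0 < T) (hk : 0 ≤ k) (hm : 0 < m)
    (hfu_int : IntervalIntegrable (fun t => f (u t)) volume 0 T)
    (hfu : ∀ t ∈ Icc 0 T, f (u t) ∈ Icc m M) (hr : r ∈ Icc 0 T) :
    hfun T k f u r ∈ Icc 0 (M / (T * m) ^ k) := by
  have hTm : 0 < T * m := mul_pos hT hm
  have hF := mul_le_integral_of_le hT.le hfu_int fun t ht => (hfu t ht).1
  obtain ⟨hmr, hrM⟩ := hfu r hr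
  exact ⟨div_nonneg (hm.le.trans hmr) (Real.rpow_nonneg (hTm.le.trans hF) k),
    div_le_div₀ (hm.le.trans (hmr.trans hrM)) hrM (Real.rpow_pos_of_pos hTm k)
      (Real.rpow_le_rpow hTm.le hF hk)⟩

lemma gfun_mem_Icc {H s : ℝ} (hh : ∀ r ∈ Icc 0 T, hfun T k f u r ∈ Icc 0 H)
    (hη : η ∈ Icc 0 T) (hs : s ∈ Icc 0 T) (hlam : 0 ≤ lam) (hβ0 : 0 ≤ β) (hβ1 : β < 1) :
    gfun T η β lam k f u s ∈ Icc 0 (lam * H * (s + β * η / (1 - β))) := by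
  have hgs : gfun T η β lam k f u s = lam * (∫ r in (0:ℝ)..s, hfun T k f u r)
      + lam * β / (1 - β) * ∫ r in (0:ℝ)..η, hfun T k f u r := by
    rw [gfun, Afun]; ring
  have hcoef : 0 ≤ lam * β / (1 - β) := div_nonneg (mul_nonneg hlam hβ0) (by linarith)
  obtain ⟨hs0, hsH⟩ := integral_mem_Icc_mul hh hs
  obtain ⟨hη0, hηH⟩ := integral_mem_Icc_mul hh hη
  rw [hgs]
  constructor
  · positivity
  · calc _ ≤ lam * (H * s) + lam * β / (1 - β) * (H * η) := by gcongr
      _ = lam * H * (s + β * η / (1 - β)) := by ring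

lemma gfun_monotoneOn (hh0 : ∀ r ∈ Icc 0 T, 0 ≤ hfun T k f u r)
    (hh_int : IntervalIntegrable (hfun T k f u) volume 0 T) (hlam : 0 ≤ lam) :
    MonotoneOn (gfun T η β lam k f u) (Icc 0 T) := by
  intro s hs s' hs' hss'
  have hint : IntervalIntegrable (hfun T k f u) volume 0 s' :=
    hh_int.mono_set (uIcc_subset_uIcc left_mem_uIcc (mem_uIcc_of_le hs'.1 hs'.2))
  have hmono := integral_le_integral_of_mem_Icc hint (fun r hr => hh0 r ⟨hr.1, hr.2.trans hs'.2⟩)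
    ⟨hs.1, hss'⟩
  simp only [gfun]
  gcongr

theorem supNorm_Gop_le {q m M : ℝ} (hT : 0 < T) (hη : η ∈ Icc 0 T) (hβ0 : 0 ≤ β) (hβ1 : β < 1)
    (hlam : 0 ≤ lam) (hk : 0 ≤ k) (hq : 1 < q) (hm : 0 < m)
    (hfu_cont : ContinuousOn (fun t => f (u t)) (Icc 0 T))
    (hfu : ∀ t ∈ Icc 0 T, f (u t) ∈ Icc m M) :
    supNorm T (Gop T η β lam k q f u) ≤
      1 / (1 - β) * (phi q (lam * M / (T * m) ^ k) *
        ∫ s in (0:ℝ)..T, phi q (s + β * η / (1 - β))) := by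
  set c := β * η / (1 - β)
  have hc : 0 ≤ c := div_nonneg (mul_nonneg hβ0 hη.1) (by linarith)
  have hh := fun r (hr : r ∈ Icc 0 T) =>
    hfun_mem_Icc hT hk hm (hfu_cont.intervalIntegrable_of_Icc hT.le) hfu hr
  have hh_int : IntervalIntegrable (hfun T k f u) volume 0 T :=
    (hfu_cont.div_const _).intervalIntegrable_of_Icc hT.le
  have hg := fun s (hs : s ∈ Icc 0 T) => gfun_mem_Icc hh hη hs hlam hβ0 hβ1
  have hψ_mono : MonotoneOn (fun s => phi q (gfun T η β lam k f u s)) (uIcc 0 T) := by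
    rw [uIcc_of_le hT.le]
    exact (monotoneOn_phi hq).comp (gfun_monotoneOn (fun r hr => (hh r hr).1) hh_int hlam)
      fun s hs => (hg s hs).1
  have hφc_mono : MonotoneOn (fun s => phi q (s + c)) (uIcc 0 T) := by
    rw [uIcc_of_le hT.le]
    exact (monotoneOn_phi hq).comp ((monotone_id.add_const c).monotoneOn _)
      fun s hs => show 0 ≤ s + c by linarith [hs.1]
  have hψ_le : ∫ s in (0:ℝ)..T, phi q (gfun T η β lam k f u s) ≤
      phi q (lam * M / (T * m) ^ k) * ∫ s in (0:ℝ)..T, phi q (s + c) := by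
    rw [← intervalIntegral.integral_const_mul]
    refine intervalIntegral.integral_mono_on hT.le hψ_mono.intervalIntegrable
      (hφc_mono.intervalIntegrable.const_mul _) fun s hs => ?_
    rw [mul_div_assoc, ← phi_mul]
    exact monotoneOn_phi hq (hg s hs).1 ((hg s hs).1.trans (hg s hs).2) (hg s hs).2
  refine supNorm_le hT.le fun t ht => ?_
  calc |Gop T η β lam k q f u t|
      ≤ 1 / (1 - β) * ∫ s in (0:ℝ)..T, phi q (gfun T η β lam k f u s) :=
        abs_neg_integral_add_le hψ_mono.intervalIntegrable (fun s hs => phi_nonneg (hg s hs).1)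
          hη ht hβ0 hβ1
    _ ≤ _ := by gcongr

end Operator

/-- `G` maps bounded subsets `D` of the cone to bounded sets; explicitly, for `u ∈ D`,
`‖Gu‖ ≤ (2/(1−β)) φ_q(λ M_D/(T m_D)^k) ∫₀ᵀ φ_q(s + βη/(1−β)) ds`, where `M_D` and `m_D`
are the sup and inf of `f(u(t))` over `u ∈ D`, `t ∈ [0,T]`. -/
theorem G_bounded_on_bounded_sets
    (T η β lam k p q : ℝ) (f : ℝ → ℝ)
    (hT : 0 < T) (hη : 0 < η) (hηT : η < T) (hβ0 : 0 < β) (hβ1 : β < 1)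
    (hlam : 0 < lam) (hk : 0 < k) (hp : 1 < p) (hpq : 1 / p + 1 / q = 1)
    (hf : Continuous f) (hfpos : ∀ x, 0 < f x)
    (D : Set (ℝ → ℝ)) (hD : ∀ u ∈ D, InCone T (β * (T - η) / (T - β * η)) u)
    (hDbdd : ∃ M : ℝ, ∀ u ∈ D, ∀ t ∈ Set.Icc (0:ℝ) T, |u t| ≤ M) :
    ∀ u ∈ D,
      supNorm T (Gop T η β lam k q f u) ≤
        2 / (1 - β) *
          phi q (lam * sSup {y : ℝ | ∃ u ∈ D, ∃ t ∈ Set.Icc (0:ℝ) T, y = f (u t)} /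
            (T * sInf {y : ℝ | ∃ u ∈ D, ∃ t ∈ Set.Icc (0:ℝ) T, y = f (u t)}) ^ k) *
          ∫ s in (0:ℝ)..T, phi q (s + β * η / (1 - β)) := by
  intro u hu
  have hq : 1 < q := (Real.holderConjugate_iff.mpr ⟨hp, by simpa only [one_div] using hpq⟩).symm.lt
  obtain ⟨R, hR⟩ := hDbdd
  set S := {y : ℝ | ∃ u ∈ D, ∃ t ∈ Set.Icc (0:ℝ) T, y = f (u t)}
  have hSK : S ⊆ f '' Icc (-R) R := by
    rintro y ⟨v, hv, t, ht, rfl⟩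
    exact ⟨v t, abs_le.mp (hR v hv t ht), rfl⟩
  have hfK : IsCompact (f '' Icc (-R) R) := isCompact_Icc.image hf
  have h0 : (0:ℝ) ∈ Icc 0 T := ⟨le_rfl, hT.le⟩
  have hm : 0 < sInf S := sInf_pos_of_subset_image isCompact_Icc hf.continuousOn
    (fun x _ => hfpos x) hSK ⟨_, u, hu, 0, h0, rfl⟩
  have hfu : ∀ t ∈ Icc 0 T, f (u t) ∈ Icc (sInf S) (sSup S) := fun t ht =>
    ⟨csInf_le (hfK.bddBelow.mono hSK) ⟨u, hu, t, ht, rfl⟩,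
      le_csSup (hfK.bddAbove.mono hSK) ⟨u, hu, t, ht, rfl⟩⟩
  have hM : 0 ≤ sSup S := hm.le.trans ((hfu 0 h0).1.trans (hfu 0 h0).2)
  have hη' : η ∈ Icc 0 T := ⟨hη.le, hηT.le⟩
  have hc : 0 ≤ β * η / (1 - β) := div_nonneg (mul_nonneg hβ0.le hη.le) (by linarith)
  refine (supNorm_Gop_le hT hη' hβ0.le hβ1 hlam.le hk.le hq hm
    (hf.comp_continuousOn (hD u hu).1) hfu).trans ?_
  rw [mul_assoc]
  gcongr
  · exact mul_nonneg (phi_nonneg (by positivity)) (intervalIntegral.integral_nonneg hT.le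
      fun s hs => phi_nonneg (by linarith [hs.1]))
  · norm_num
end

section
/- Every solution u of the discrete BVP satisfies u(t) ≥ 0 for all t ∈ {0,…,T}. -/
/-!
Write `D t = φ_p(Δu(t))` for the flux. The equation says `D (t-1) - D t = λ h_u(t) > 0`, so `D` is
strictly decreasing on `{0,…,T-1}`; in particular `D η < D 0 = β D η`, which with `0 < β < 1` forces
`D 0 < 0`. Hence every flux is negative, `u` is strictly decreasing, and
`u T < u η` together with `u T = β u η` gives `u T > 0`, the minimum of `u`. Both boundary steps are
the same observation: `a < b` and `a = β b` with `0 < β < 1` force `a > 0`.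
-/

open Finset

/-- Discrete `h_u(t) = f(u(t)) / (Σ_{τ=1}^{T} f(u(τ)))^k`. -/
noncomputable def hfunD (T : ℕ) (k : ℝ) (f : ℝ → ℝ) (u : ℕ → ℝ) (t : ℕ) : ℝ :=
  f (u t) / (∑ τ ∈ Finset.Icc 1 T, f (u τ)) ^ k

/-- Discrete `A_u = −(λβ/(1−β)) Σ_{r=1}^{η} h_u(r)`. -/
noncomputable def AfunD (T η : ℕ) (β lam k : ℝ) (f : ℝ → ℝ) (u : ℕ → ℝ) : ℝ :=
  -(lam * β / (1 - β)) * ∑ r ∈ Finset.Icc 1 η, hfunD T k f u r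

/-- Discrete `g_u(s) = λ Σ_{r=1}^{s} h_u(r) − A_u`. -/
noncomputable def gfunD (T η : ℕ) (β lam k : ℝ) (f : ℝ → ℝ) (u : ℕ → ℝ) (s : ℕ) : ℝ :=
  lam * (∑ r ∈ Finset.Icc 1 s, hfunD T k f u r) - AfunD T η β lam k f u

/-- Discrete `B_u = (1/(1−β)) ( Σ_{s=0}^{T−1} φ_q(g_u(s)) − β Σ_{s=0}^{η−1} φ_q(g_u(s)) )`. -/
noncomputable def BfunD (T η : ℕ) (β lam k q : ℝ) (f : ℝ → ℝ) (u : ℕ → ℝ) : ℝ :=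
  (1 / (1 - β)) * ((∑ s ∈ Finset.range T, phi q (gfunD T η β lam k f u s))
    - β * ∑ s ∈ Finset.range η, phi q (gfunD T η β lam k f u s))

/-- `u : {0,…,T} → ℝ` is a solution of the discrete BVP:
`−(φ_p(Δu(t)) − φ_p(Δu(t−1))) = λ h_u(t)` for `t ∈ {1,…,T−1}`,
`φ_p(Δu(0)) − β φ_p(Δu(η)) = 0` and `u(T) − β u(η) = 0`, where `Δu(t) = u(t+1) − u(t)`. -/
def IsSolutionD (T η : ℕ) (β lam k p : ℝ) (f : ℝ → ℝ) (u : ℕ → ℝ) : Prop :=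
  (∀ t ∈ Finset.Icc 1 (T - 1),
      -(phi p (u (t + 1) - u t) - phi p (u t - u (t - 1))) = lam * hfunD T k f u t) ∧
  phi p (u 1 - u 0) - β * phi p (u (η + 1) - u η) = 0 ∧
  u T - β * u η = 0

lemma neg_of_phi_neg {p s : ℝ} (h : phi p s < 0) : s < 0 :=
  neg_of_mul_neg_right h (Real.rpow_nonneg (abs_nonneg s) _)

lemma hfunD_pos {T : ℕ} {k : ℝ} {f : ℝ → ℝ} (u : ℕ → ℝ) (t : ℕ) (hT : 1 ≤ T)
    (hf : ∀ x, 0 < f x) : 0 < hfunD T k f u t := by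
  have hsum : 0 < ∑ τ ∈ Icc 1 T, f (u τ) :=
    sum_pos (fun τ _ => hf (u τ)) ⟨1, mem_Icc.mpr ⟨le_rfl, hT⟩⟩
  exact div_pos (hf _) (Real.rpow_pos_of_pos hsum k)

lemma pos_of_lt_of_eq_mul {a b β : ℝ} (hβ0 : 0 < β) (hβ1 : β < 1) (hab : a < b)
    (ha : a = β * b) : 0 < a := by
  have hb : 0 < b := by nlinarith
  rw [ha]
  exact mul_pos hβ0 hb

namespace IsSolutionD

variable {T η : ℕ} {β lam k p : ℝ} {f : ℝ → ℝ} {u : ℕ → ℝ}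

lemma flux_strictAntiOn (hu : IsSolutionD T η β lam k p f u) (hlam : 0 < lam)
    (hf : ∀ x, 0 < f x) :
    StrictAntiOn (fun t => phi p (u (t + 1) - u t)) (Set.Iic (T - 1)) := by
  refine strictAntiOn_Iic_of_succ_lt fun m hm => ?_
  have heq := hu.1 (m + 1) (mem_Icc.mpr ⟨le_add_self, hm⟩)
  have hh : 0 < lam * hfunD T k f u (m + 1) := mul_pos hlam (hfunD_pos u _ (by omega) hf)
  simp only [Order.succ_eq_add_one, Nat.add_sub_cancel] at heq ⊢
  linarith

lemma flux_neg (hu : IsSolutionD T η β lam k p f u) (hη : 0 < η) (hηT : η < T)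
    (hβ0 : 0 < β) (hβ1 : β < 1) (hlam : 0 < lam) (hf : ∀ x, 0 < f x) {t : ℕ}
    (ht : t ≤ T - 1) : phi p (u (t + 1) - u t) < 0 := by
  have hD := hu.flux_strictAntiOn hlam hf
  have hDη : phi p (u (η + 1) - u η) < phi p (u 1 - u 0) :=
    hD (Set.mem_Iic.mpr (Nat.zero_le _)) (Set.mem_Iic.mpr (by omega)) hη
  have hD0 : 0 < -phi p (u 1 - u 0) :=
    pos_of_lt_of_eq_mul hβ0 hβ1 (neg_lt_neg hDη) (by linarith [hu.2.1])
  exact (hD.antitoneOn (Set.mem_Iic.mpr (Nat.zero_le _)) (Set.mem_Iic.mpr ht)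
    (Nat.zero_le t)).trans_lt (neg_pos.mp hD0)

lemma strictAntiOn (hu : IsSolutionD T η β lam k p f u) (hη : 0 < η) (hηT : η < T)
    (hβ0 : 0 < β) (hβ1 : β < 1) (hlam : 0 < lam) (hf : ∀ x, 0 < f x) :
    StrictAntiOn u (Set.Iic T) :=
  strictAntiOn_Iic_of_succ_lt fun m hm => by
    have hΔ := neg_of_phi_neg (hu.flux_neg hη hηT hβ0 hβ1 hlam hf (t := m) (by omega))
    rw [Order.succ_eq_add_one]
    linarith

end IsSolutionD

theorem discrete_solution_nonneg_general
    (T η : ℕ) (β lam k p : ℝ) (f : ℝ → ℝ)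
    (hη : 0 < η) (hηT : η < T) (hβ0 : 0 < β) (hβ1 : β < 1)
    (hlam : 0 < lam)
    (hfpos : ∀ x, 0 < f x) (u : ℕ → ℝ) (hu : IsSolutionD T η β lam k p f u) :
    ∀ t ≤ T, 0 ≤ u t := by
  intro t ht
  have hanti := hu.strictAntiOn hη hηT hβ0 hβ1 hlam hfpos
  have huT_lt : u T < u η := hanti (Set.mem_Iic.mpr hηT.le) (Set.mem_Iic.mpr le_rfl) hηT
  have huT : 0 < u T := pos_of_lt_of_eq_mul hβ0 hβ1 huT_lt (by linarith [hu.2.2])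
  calc 0 ≤ u T := huT.le
    _ ≤ u t := hanti.antitoneOn (Set.mem_Iic.mpr ht) (Set.mem_Iic.mpr le_rfl) ht

/-- Every solution of the discrete BVP is nonnegative on `{0,…,T}`. -/
theorem discrete_solution_nonneg
    (T η : ℕ) (β lam k p : ℝ) (f : ℝ → ℝ)
    (hT : 2 ≤ T) (hη : 0 < η) (hηT : η < T) (hβ0 : 0 < β) (hβ1 : β < 1)
    (hlam : 0 < lam) (hk : 0 < k) (hp : 1 < p)
    (hfpos : ∀ x, 0 < f x) (u : ℕ → ℝ) (hu : IsSolutionD T η β lam k p f u) :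
    ∀ t ≤ T, 0 ≤ u t :=
  discrete_solution_nonneg_general T η β lam k p f hη hηT hβ0 hβ1 hlam hfpos u hu
end
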